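/- arXiv:2603.22408 — 2 statements merged into one kernel-verified Lean document; each statement's English description precedes it below -/
import Mathlib

section
/- (Minimum property of cubic splines, de Boor) Given knots a = τ_1 < ... < τ_L = b and values β_1,...,β_L ∈ ℝ, among all functions f ∈ C¹[a,b] with f'' ∈ L²[a,b] satisfying f(τ_ℓ) = β_ℓ for all ℓ, the natural cubic spline interpolant uniquely minimizes ∫_a^b (f''(τ))² dτ. -/
/-!
Write `g = f - s` for an admissible interpolant `f`. On each knot interval `s` is a cubic, so
`s''` is affine there with some slope `k`; integrating by parts,
`∫ s'' g'' = [s'' g'] - k [g]`, and `[g] = 0` because `g` vanishes at the knots. Summed over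
the intervals the boundary terms telescope to `s''(b) g'(b) - s''(a) g'(a) = 0` by the natural end
conditions. Hence `s''` is orthogonal to `f'' - s''` in `L²`, and
`∫ f''² = ∫ s''² + ∫ (f'' - s'')²`. Equality forces `f'' = s''` a.e., so `g'` is constant and
`g` is affine; vanishing at `a` and `b`, it is zero.
-/

open MeasureTheory Set

/-- The admissible class F₂[a,b]: f ∈ C¹[a,b] with f' absolutely continuous and
weak second derivative f'' ∈ L²[a,b]. -/
def Admissible (a b : ℝ) (f f' f'' : ℝ → ℝ) : Prop :=
  ContinuousOn f (Icc a b) ∧ ContinuousOn f' (Icc a b) ∧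
  (∀ t ∈ Icc a b, HasDerivAt f (f' t) t) ∧
  (∀ t ∈ Icc a b, f' t = f' a + ∫ u in a..t, f'' u) ∧
  MemLp f'' 2 (volume.restrict (Icc a b))

/-- A natural cubic spline with (0-based) knots τ_0 < ... < τ_{L-1}: a C² function which is a
cubic polynomial on each knot interval, with vanishing second derivative at both endpoints. -/
def NatCubicSpline (L : ℕ) (τ : ℕ → ℝ) (s s' s'' : ℝ → ℝ) : Prop :=
  (∀ t ∈ Icc (τ 0) (τ (L - 1)), HasDerivAt s (s' t) t) ∧
  (∀ t ∈ Icc (τ 0) (τ (L - 1)), HasDerivAt s' (s'' t) t) ∧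
  ContinuousOn s'' (Icc (τ 0) (τ (L - 1))) ∧
  (∀ ℓ, ℓ < L - 1 → ∃ p : Polynomial ℝ, p.natDegree ≤ 3 ∧
      ∀ t ∈ Icc (τ ℓ) (τ (ℓ + 1)), s t = p.eval t) ∧
  s'' (τ 0) = 0 ∧ s'' (τ (L - 1)) = 0

theorem mem_Icc_of_forall_lt_succ {τ : ℕ → ℝ} {n : ℕ} (hτ : ∀ ℓ < n, τ ℓ < τ (ℓ + 1))
    {ℓ : ℕ} (hℓ : ℓ ≤ n) : τ ℓ ∈ Icc (τ 0) (τ n) :=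
  have hmono := (strictMonoOn_Iic_of_lt_succ hτ).monotoneOn
  ⟨hmono (Nat.zero_le n) hℓ (Nat.zero_le ℓ), hmono hℓ self_mem_Iic hℓ⟩

theorem eqOn_of_hasDerivAt_of_eqOn {f f' g g' : ℝ → ℝ} {c d : ℝ} (hcd : c < d)
    (hf : ∀ t ∈ Icc c d, HasDerivAt f (f' t) t) (hg : ∀ t, HasDerivAt g (g' t) t)
    (hfg : EqOn f g (Icc c d)) : EqOn f' g' (Icc c d) := fun t ht =>
  (uniqueDiffOn_Icc hcd t ht).eq_deriv _
    ((hf t ht).hasDerivWithinAt.congr hfg.symm (hfg ht).symm) (hg t).hasDerivWithinAt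

open Polynomial in
theorem exists_affine_of_eqOn_cubic {s s' s'' : ℝ → ℝ} {c d : ℝ} (hcd : c < d)
    (hs : ∀ t ∈ Icc c d, HasDerivAt s (s' t) t) (hs' : ∀ t ∈ Icc c d, HasDerivAt s' (s'' t) t)
    {p : ℝ[X]} (hp : p.natDegree ≤ 3) (hsp : EqOn s (fun t => p.eval t) (Icc c d)) :
    ∃ α k : ℝ, ∀ t ∈ Icc c d, s'' t = α + k * t := by
  have hs'p := eqOn_of_hasDerivAt_of_eqOn hcd hs p.hasDerivAt hsp
  have hs''p := eqOn_of_hasDerivAt_of_eqOn hcd hs' p.derivative.hasDerivAt hs'p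
  set q := p.derivative.derivative
  have hq : q.natDegree ≤ 1 :=
    (natDegree_derivative_le _).trans (by have := natDegree_derivative_le p; omega)
  refine ⟨q.coeff 0, q.coeff 1, fun t ht => ?_⟩
  rw [hs''p ht]
  conv_lhs => rw [eq_X_add_C_of_natDegree_le_one hq]
  simp only [eval_add, eval_mul, eval_C, eval_X]
  ring

theorem integral_mul_eq_sub_of_eq_add_integral {u v w : ℝ → ℝ} {c d : ℝ} (hcd : c ≤ d)
    (hu : ContDiff ℝ 1 u) (hw : IntervalIntegrable w volume c d)
    (hv : ∀ t ∈ Icc c d, v t = v c + ∫ x in c..t, w x) :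
    ∫ t in c..d, u t * w t = u d * v d - u c * v c - ∫ t in c..d, deriv u t * v t := by
  set V : ℝ → ℝ := fun t => ∫ x in c..t, w x
  have hV : AbsolutelyContinuousOnInterval V c d :=
    hw.absolutelyContinuousOnInterval_intervalIntegral left_mem_uIcc
  have hU : AbsolutelyContinuousOnInterval u c d :=
    hu.contDiffOn.absolutelyContinuousOnInterval
  have hderivV : ∫ t in c..d, u t * w t = ∫ t in c..d, u t * deriv V t := by
    refine intervalIntegral.integral_congr_ae ?_
    filter_upwards [hw.ae_hasDerivAt_integral] with t ht htI
    rw [(ht (uIoc_subset_uIcc htI) c left_mem_uIcc).deriv]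
  have hvV : ∫ t in c..d, deriv u t * v t
      = v c * (u d - u c) + ∫ t in c..d, deriv u t * V t := by
    have hu' : Continuous (deriv u) := hu.continuous_deriv le_rfl
    rw [← intervalIntegral.integral_deriv_eq_sub (fun t _ => hu.differentiable one_ne_zero t)
      (hu'.intervalIntegrable _ _), ← intervalIntegral.integral_const_mul,
      ← intervalIntegral.integral_add ((hu'.intervalIntegrable _ _).const_mul _)
        (hV.continuousOn.intervalIntegrable.continuousOn_mul hu'.continuousOn)]
    refine intervalIntegral.integral_congr fun t ht => ?_
    rw [uIcc_of_le hcd] at ht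
    simp only [hv t ht, V]
    ring
  have hVd : V d = v d - v c := by rw [hv d (right_mem_Icc.mpr hcd)]; ring
  have hVc : V c = 0 := intervalIntegral.integral_same
  rw [hderivV, hU.integral_mul_deriv_eq_deriv_mul hV, hvV, hVd, hVc]
  ring

theorem integral_sq_eq_add_integral_sq_sub {X : Type*} [MeasurableSpace X] {μ : Measure X}
    {f g : X → ℝ} (hf : MemLp f 2 μ) (hg : MemLp g 2 μ)
    (horth : ∫ x, g x * (f x - g x) ∂μ = 0) :
    ∫ x, f x ^ 2 ∂μ = ∫ x, g x ^ 2 ∂μ + ∫ x, (f x - g x) ^ 2 ∂μ := by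
  have hg2 : Integrable (fun x => g x ^ 2) μ := hg.integrable_sq
  have hmul : Integrable (fun x => 2 * (g x * (f x - g x))) μ :=
    (hg.integrable_mul (hf.sub hg)).const_mul 2
  have hfg2 : Integrable (fun x => (f x - g x) ^ 2) μ := (hf.sub hg).integrable_sq
  calc ∫ x, f x ^ 2 ∂μ
      = ∫ x, (g x ^ 2 + 2 * (g x * (f x - g x))) + (f x - g x) ^ 2 ∂μ :=
        integral_congr_ae (ae_of_all _ fun x => by ring)
    _ = ∫ x, g x ^ 2 ∂μ + ∫ x, (f x - g x) ^ 2 ∂μ := by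
        rw [integral_add (f := fun x => g x ^ 2 + 2 * (g x * (f x - g x))) (hg2.add hmul) hfg2,
          integral_add hg2 hmul, integral_const_mul, horth, mul_zero, add_zero]

theorem eqOn_zero_of_hasDerivAt_const {f : ℝ → ℝ} {a b m : ℝ} (hab : a < b)
    (hf : ∀ t ∈ Icc a b, HasDerivAt f m t) (ha : f a = 0) (hb : f b = 0) :
    EqOn f 0 (Icc a b) := by
  have hline : ∀ t ∈ Icc a b, f t = m * (t - a) :=
    eq_of_has_deriv_right_eq (fun t ht => (hf t (Ico_subset_Icc_self ht)).hasDerivWithinAt)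
      (fun t _ => ((hasDerivAt_id t).sub_const a).const_mul m |>.hasDerivWithinAt |>.congr_deriv
        (mul_one m))
      (fun t ht => (hf t ht).continuousAt.continuousWithinAt) (by fun_prop) (by simp [ha])
  have hm : m = 0 := by
    have := hline b (right_mem_Icc.mpr hab.le)
    rw [hb, eq_comm, mul_eq_zero] at this
    exact this.resolve_right (sub_ne_zero.mpr hab.ne')
  intro t ht
  simp [hline t ht, hm]

namespace Admissible

variable {a b : ℝ} {f f' f'' : ℝ → ℝ}

theorem integrableOn (hf : Admissible a b f f' f'') : IntegrableOn f'' (Icc a b) :=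
  hf.2.2.2.2.integrable one_le_two

theorem intervalIntegrable (hf : Admissible a b f f' f'') {c d : ℝ} (hc : c ∈ Icc a b)
    (hd : d ∈ Icc a b) : IntervalIntegrable f'' volume c d :=
  (hf.integrableOn.mono_set (uIcc_subset_Icc hc hd)).intervalIntegrable

theorem eq_add_integral (hf : Admissible a b f f' f'') {c : ℝ} (hc : c ∈ Icc a b) :
    ∀ t ∈ Icc a b, f' t = f' c + ∫ u in c..t, f'' u := fun t ht => by
  have ha : a ∈ Icc a b := left_mem_Icc.mpr (hc.1.trans hc.2)
  rw [← intervalIntegral.integral_interval_sub_left (hf.intervalIntegrable ha ht)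
    (hf.intervalIntegrable ha hc), hf.2.2.2.1 t ht, hf.2.2.2.1 c hc]
  ring

theorem mono (hf : Admissible a b f f' f'') {c d : ℝ} (hc : c ∈ Icc a b) (hd : d ∈ Icc a b) :
    Admissible c d f f' f'' := by
  have hsub : Icc c d ⊆ Icc a b := Icc_subset_Icc hc.1 hd.2
  exact ⟨hf.1.mono hsub, hf.2.1.mono hsub, fun t ht => hf.2.2.1 t (hsub ht),
    fun t ht => hf.eq_add_integral hc t (hsub ht),
    hf.2.2.2.2.mono_measure (Measure.restrict_mono hsub le_rfl)⟩

theorem sub (hf : Admissible a b f f' f'') {g g' g'' : ℝ → ℝ} (hg : Admissible a b g g' g'') :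
    Admissible a b (f - g) (f' - g') (f'' - g'') := by
  refine ⟨hf.1.sub hg.1, hf.2.1.sub hg.2.1, fun t ht => (hf.2.2.1 t ht).sub (hg.2.2.1 t ht),
    fun t ht => ?_, hf.2.2.2.2.sub hg.2.2.2.2⟩
  have ha : a ∈ Icc a b := left_mem_Icc.mpr (ht.1.trans ht.2)
  simp only [Pi.sub_apply]
  rw [intervalIntegral.integral_sub (hf.intervalIntegrable ha ht) (hg.intervalIntegrable ha ht),
    hf.2.2.2.1 t ht, hg.2.2.2.1 t ht]
  ring

theorem integral_affine_mul (hf : Admissible a b f f' f'') (hab : a ≤ b) (hfab : f b = f a)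
    (α k : ℝ) :
    ∫ t in a..b, (α + k * t) * f'' t = (α + k * b) * f' b - (α + k * a) * f' a := by
  have hslope : ∫ t in a..b, deriv (fun t => α + k * t) t * f' t = 0 := by
    have hderiv : deriv (fun t => α + k * t) = fun _ => k := by
      funext t; simp
    rw [hderiv, intervalIntegral.integral_const_mul,
      intervalIntegral.integral_eq_sub_of_hasDerivAt
        (fun t ht => hf.2.2.1 t (uIcc_of_le hab ▸ ht))
        (hf.2.1.mono (uIcc_of_le hab).subset).intervalIntegrable,
      hfab, sub_self, mul_zero]
  rw [integral_mul_eq_sub_of_eq_add_integral hab (by fun_prop)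
    (hf.intervalIntegrable (left_mem_Icc.mpr hab) (right_mem_Icc.mpr hab)) hf.2.2.2.1, hslope,
    sub_zero]

theorem eqOn_zero_of_integral_sq_eq_zero (hab : a < b) (hf : Admissible a b f f' f'')
    (ha : f a = 0) (hb : f b = 0) (h : ∫ t in a..b, f'' t ^ 2 = 0) : EqOn f 0 (Icc a b) := by
  rw [intervalIntegral.integral_of_le hab.le] at h
  have hL2 : MemLp f'' 2 (volume.restrict (Ioc a b)) :=
    hf.2.2.2.2.mono_measure (Measure.restrict_mono Ioc_subset_Icc_self le_rfl)
  have hsq : (fun t => f'' t ^ 2) =ᵐ[volume.restrict (Ioc a b)] 0 :=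
    (integral_eq_zero_iff_of_nonneg (fun t => sq_nonneg (f'' t)) hL2.integrable_sq).mp h
  have hzero : ∀ᵐ t, t ∈ Ioc a b → f'' t = 0 := by
    rw [← ae_restrict_iff' measurableSet_Ioc]
    filter_upwards [hsq] with t ht
    exact pow_eq_zero_iff two_ne_zero |>.mp ht
  have hconst : ∀ t ∈ Icc a b, f' t = f' a := fun t ht => by
    rw [hf.2.2.2.1 t ht, intervalIntegral.integral_zero_ae, add_zero]
    filter_upwards [hzero] with u hu hut
    exact hu (Ioc_subset_Ioc_right ht.2 (uIoc_of_le ht.1 ▸ hut))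
  exact eqOn_zero_of_hasDerivAt_const hab (fun t ht => hconst t ht ▸ hf.2.2.1 t ht) ha hb

end Admissible

namespace NatCubicSpline

variable {L : ℕ} {τ : ℕ → ℝ} {s s' s'' : ℝ → ℝ}

theorem admissible (hs : NatCubicSpline L τ s s' s'') :
    Admissible (τ 0) (τ (L - 1)) s s' s'' := by
  obtain ⟨hs, hs', hs''c, -⟩ := hs
  refine ⟨fun t ht => (hs t ht).continuousAt.continuousWithinAt,
    fun t ht => (hs' t ht).continuousAt.continuousWithinAt, hs, fun t ht => ?_, ?_⟩
  · have hsub : uIcc (τ 0) t ⊆ Icc (τ 0) (τ (L - 1)) :=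
      uIcc_subset_Icc (left_mem_Icc.mpr (ht.1.trans ht.2)) ht
    rw [intervalIntegral.integral_eq_sub_of_hasDerivAt (fun u hu => hs' u (hsub hu))
      (hs''c.mono hsub).intervalIntegrable]
    ring
  · exact (memLp_two_iff_integrable_sq (hs''c.aestronglyMeasurable measurableSet_Icc)).mpr
      (hs''c.pow 2).integrableOn_Icc

theorem integral_mul_eq_zero (hτ : ∀ ℓ < L - 1, τ ℓ < τ (ℓ + 1))
    (hs : NatCubicSpline L τ s s' s'') {g g' g'' : ℝ → ℝ}
    (hg : Admissible (τ 0) (τ (L - 1)) g g' g'') (hg0 : ∀ ℓ < L, g (τ ℓ) = 0) :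
    ∫ t in τ 0..τ (L - 1), s'' t * g'' t = 0 := by
  have hknot : ∀ ℓ < L - 1,
      τ ℓ ∈ Icc (τ 0) (τ (L - 1)) ∧ τ (ℓ + 1) ∈ Icc (τ 0) (τ (L - 1)) :=
    fun ℓ hℓ => ⟨mem_Icc_of_forall_lt_succ hτ hℓ.le, mem_Icc_of_forall_lt_succ hτ hℓ⟩
  have hpiece : ∀ ℓ < L - 1, ∫ t in τ ℓ..τ (ℓ + 1), s'' t * g'' t
      = s'' (τ (ℓ + 1)) * g' (τ (ℓ + 1)) - s'' (τ ℓ) * g' (τ ℓ) := fun ℓ hℓ => by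
    obtain ⟨hc, hd⟩ := hknot ℓ hℓ
    have hcd := (hτ ℓ hℓ).le
    have hsub : Icc (τ ℓ) (τ (ℓ + 1)) ⊆ Icc (τ 0) (τ (L - 1)) := Icc_subset_Icc hc.1 hd.2
    obtain ⟨p, hp, hsp⟩ := hs.2.2.2.1 ℓ hℓ
    obtain ⟨α, k, hs''⟩ := exists_affine_of_eqOn_cubic (hτ ℓ hℓ)
      (fun t ht => hs.1 t (hsub ht)) (fun t ht => hs.2.1 t (hsub ht)) hp hsp
    calc ∫ t in τ ℓ..τ (ℓ + 1), s'' t * g'' t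
        = ∫ t in τ ℓ..τ (ℓ + 1), (α + k * t) * g'' t :=
          intervalIntegral.integral_congr fun t ht => by rw [hs'' t (uIcc_of_le hcd ▸ ht)]
      _ = _ := (hg.mono hc hd).integral_affine_mul hcd
          (by rw [hg0 _ (by omega), hg0 _ (by omega)]) α k
      _ = _ := by rw [hs'' _ (left_mem_Icc.mpr hcd), hs'' _ (right_mem_Icc.mpr hcd)]
  rw [← intervalIntegral.sum_integral_adjacent_intervals fun ℓ hℓ =>
      (hg.intervalIntegrable (hknot ℓ hℓ).1 (hknot ℓ hℓ).2).continuousOn_mul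
        (hs.2.2.1.mono (uIcc_subset_Icc (hknot ℓ hℓ).1 (hknot ℓ hℓ).2)),
    Finset.sum_congr rfl fun ℓ hℓ => hpiece ℓ (Finset.mem_range.mp hℓ),
    Finset.sum_range_sub (fun ℓ => s'' (τ ℓ) * g' (τ ℓ)), hs.2.2.2.2.1, hs.2.2.2.2.2]
  ring

theorem integral_sq_eq_add (hτ : ∀ ℓ < L - 1, τ ℓ < τ (ℓ + 1))
    (hs : NatCubicSpline L τ s s' s'') {f f' f'' : ℝ → ℝ}
    (hf : Admissible (τ 0) (τ (L - 1)) f f' f'') (hfs : ∀ ℓ < L, f (τ ℓ) = s (τ ℓ)) :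
    ∫ t in τ 0..τ (L - 1), f'' t ^ 2
      = (∫ t in τ 0..τ (L - 1), s'' t ^ 2) + ∫ t in τ 0..τ (L - 1), (f'' t - s'' t) ^ 2 := by
  have horth := hs.integral_mul_eq_zero hτ (hf.sub hs.admissible)
    fun ℓ hℓ => sub_eq_zero.mpr (hfs ℓ hℓ)
  have hab := (mem_Icc_of_forall_lt_succ hτ (Nat.zero_le (L - 1))).2
  have hIoc : volume.restrict (Ioc (τ 0) (τ (L - 1)))
      ≤ volume.restrict (Icc (τ 0) (τ (L - 1))) :=
    Measure.restrict_mono Ioc_subset_Icc_self le_rfl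
  simp only [intervalIntegral.integral_of_le hab, Pi.sub_apply] at horth ⊢
  exact integral_sq_eq_add_integral_sq_sub (hf.2.2.2.2.mono_measure hIoc)
    (hs.admissible.2.2.2.2.mono_measure hIoc) horth

end NatCubicSpline

/-- Minimum property of natural cubic splines (de Boor): among all f ∈ F₂[a,b] interpolating
the values β_ℓ at the knots, the natural cubic spline interpolant uniquely minimizes
∫_a^b (f'')². -/
theorem stmt4 (L : ℕ) (hL : 2 ≤ L) (τ β : ℕ → ℝ)
    (hτ : ∀ ℓ, ℓ < L - 1 → τ ℓ < τ (ℓ + 1))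
    (s s' s'' : ℝ → ℝ)
    (hs : NatCubicSpline L τ s s' s'')
    (hsi : ∀ ℓ, ℓ < L → s (τ ℓ) = β ℓ) :
    (∀ f f' f'', Admissible (τ 0) (τ (L - 1)) f f' f'' →
        (∀ ℓ, ℓ < L → f (τ ℓ) = β ℓ) →
        (∫ t in (τ 0)..(τ (L - 1)), (s'' t) ^ 2) ≤ ∫ t in (τ 0)..(τ (L - 1)), (f'' t) ^ 2) ∧
    (∀ f f' f'', Admissible (τ 0) (τ (L - 1)) f f' f'' →
        (∀ ℓ, ℓ < L → f (τ ℓ) = β ℓ) →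
        (∫ t in (τ 0)..(τ (L - 1)), (f'' t) ^ 2) = (∫ t in (τ 0)..(τ (L - 1)), (s'' t) ^ 2) →
        ∀ t ∈ Icc (τ 0) (τ (L - 1)), f t = s t) := by
  have hfs : ∀ f : ℝ → ℝ, (∀ ℓ < L, f (τ ℓ) = β ℓ) → ∀ ℓ < L, f (τ ℓ) = s (τ ℓ) :=
    fun f hf ℓ hℓ => (hf ℓ hℓ).trans (hsi ℓ hℓ).symm
  refine ⟨fun f f' f'' hf hfi => ?_, fun f f' f'' hf hfi heq => ?_⟩
  · rw [hs.integral_sq_eq_add hτ hf (hfs f hfi), le_add_iff_nonneg_right]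
    exact intervalIntegral.integral_nonneg (mem_Icc_of_forall_lt_succ hτ (Nat.zero_le _)).2
      fun t _ => sq_nonneg _
  · have hab : τ 0 < τ (L - 1) :=
      strictMonoOn_Iic_of_lt_succ hτ (Nat.zero_le _) self_mem_Iic (by omega)
    have hzero : ∫ t in τ 0..τ (L - 1), (f'' - s'') t ^ 2 = 0 := by
      simpa only [Pi.sub_apply, hs.integral_sq_eq_add hτ hf (hfs f hfi), add_eq_left] using heq
    intro t ht
    refine sub_eq_zero.mp
      ((hf.sub hs.admissible).eqOn_zero_of_integral_sq_eq_zero hab ?_ ?_ hzero ht)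
    · exact sub_eq_zero.mpr (hfs f hfi 0 (by omega))
    · exact sub_eq_zero.mpr (hfs f hfi (L - 1) (by omega))
end

section
/- Let τ_1 < ... < τ_L be points in [a,b] and β_1, ..., β_L ∈ ℝ. Among all continuous piecewise-C¹ functions f on [a,b] with f' of bounded variation and f(τ_ℓ) = β_ℓ for all ℓ, the continuous piecewise linear interpolant with knots at the τ_ℓ (extended constantly outside [τ_1, τ_L]) achieves total variation of f' equal to Σ_{ℓ=1}^{L-2} |s_{ℓ+1} - s_ℓ| where s_ℓ = (β_{ℓ+1} - β_ℓ)/(τ_{ℓ+1} - τ_ℓ), and no interpolant achieves smaller total variation of its derivative. -/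
/-!
On each knot interval `[τ ℓ, τ (ℓ + 1)]` the mean value theorem (which survives a finite set of
exceptional points by cutting the interval there) yields two points `x ≤ x'` inside it with the
chord slope `s ℓ` between `f' x` and `f' x'`. Going from `s ℓ` to `s (ℓ + 1)` through `f' x' ℓ`
and `f' x (ℓ + 1)`, the triangle inequality bounds `∑ |s (ℓ + 1) - s ℓ|` by the variation of `f'`
along the partition `x 0 ≤ x' 0 ≤ x 1 ≤ …`. For the interpolant, `f'` is a step function whose
variation is exactly the sum of its jumps.
-/

open Set

namespace eVariationOn

variable {α E : Type*} [LinearOrder α] [PseudoEMetricSpace E]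

theorem Icc_of_eqOn_Ico {f : α → E} {a b : α} {c : E} (hab : a < b)
    (hf : EqOn f (fun _ ↦ c) (Ico a b)) : eVariationOn f (Icc a b) = edist c (f b) := by
  have hfa : f a = c := hf ⟨le_rfl, hab⟩
  refine le_antisymm ?_ (hfa ▸ edist_le f (left_mem_Icc.2 hab.le) (right_mem_Icc.2 hab.le))
  -- `f` factors through the monotone retraction of `[a, b]` onto `{a, b}`.
  set φ : α → α := fun x ↦ if x < b then a else b
  have hfφ : EqOn f (f ∘ φ) (Icc a b) := by
    intro x hx
    by_cases hxb : x < b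
    · simp [φ, hxb, hfa, hf ⟨hx.1, hxb⟩]
    · simp [φ, le_antisymm hx.2 (not_lt.1 hxb)]
  have hφ : MonotoneOn φ (Icc a b) := by
    intro x _ y _ hxy
    by_cases hyb : y < b
    · simp [φ, hyb, hxy.trans_lt hyb]
    · by_cases hxb : x < b <;> simp [φ, hxb, hyb, hab.le]
  have hφmaps : MapsTo φ (Icc a b) {a, b} := fun x _ ↦ by
    by_cases hxb : x < b <;> simp [φ, hxb]
  calc eVariationOn f (Icc a b) = eVariationOn (f ∘ φ) (Icc a b) := eq_of_eqOn hfφ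
    _ ≤ eVariationOn f {a, b} := comp_le_of_monotoneOn f φ hφ hφmaps
    _ = edist c (f b) := by rw [pair, hfa]

theorem Icc_eq_sum_Icc (f : α → E) {τ : ℕ → α} {n : ℕ} (hτ : MonotoneOn τ (Iic n)) :
    eVariationOn f (Icc (τ 0) (τ n)) =
      ∑ ℓ ∈ Finset.range n, eVariationOn f (Icc (τ ℓ) (τ (ℓ + 1))) := by
  induction n with
  | zero => simp
  | succ n ih =>
    have hτn : τ 0 ≤ τ n := hτ (by simp) (by simp) (Nat.zero_le n)
    have hτn' : τ n ≤ τ (n + 1) := hτ (by simp) (by simp) n.le_succ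
    rw [Finset.sum_range_succ, ← ih (hτ.mono (Iic_subset_Iic.2 n.le_succ))]
    simpa using (Icc_add_Icc f (s := univ) hτn hτn' (mem_univ _)).symm

theorem Icc_of_step {f : α → E} {τ : ℕ → α} {c : ℕ → E} {n : ℕ}
    (hτ : StrictMonoOn τ (Iic (n + 1)))
    (hf : ∀ ℓ ≤ n, EqOn f (fun _ ↦ c ℓ) (Ico (τ ℓ) (τ (ℓ + 1))))
    (hlast : f (τ (n + 1)) = c n) :
    eVariationOn f (Icc (τ 0) (τ (n + 1))) =
      ∑ ℓ ∈ Finset.range n, edist (c (ℓ + 1)) (c ℓ) := by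
  have hlt : ∀ ℓ ≤ n, τ ℓ < τ (ℓ + 1) := fun ℓ hℓ ↦
    hτ (mem_Iic.2 (by omega)) (mem_Iic.2 (by omega)) ℓ.lt_succ_self
  rw [Icc_eq_sum_Icc f hτ.monotoneOn, Finset.sum_range_succ, Icc_of_eqOn_Ico (hlt n le_rfl)
    (hf n le_rfl), hlast, edist_self, add_zero]
  refine Finset.sum_congr rfl fun ℓ hℓ ↦ ?_
  have hℓ : ℓ < n := Finset.mem_range.1 hℓ
  have hnext : f (τ (ℓ + 1)) = c (ℓ + 1) := hf (ℓ + 1) hℓ ⟨le_rfl, hlt (ℓ + 1) hℓ⟩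
  rw [Icc_of_eqOn_Ico (hlt ℓ hℓ.le) (hf ℓ hℓ.le), hnext, edist_comm]

theorem edist_add_edist_le (f : α → E) {u v w : α} (huv : u ≤ v) (hvw : v ≤ w) :
    edist (f u) (f v) + edist (f v) (f w) ≤ eVariationOn f (Icc u w) := by
  have hsplit := Icc_add_Icc f (s := univ) huv hvw (mem_univ _)
  simp only [univ_inter] at hsplit
  rw [← hsplit]
  exact add_le_add (edist_le f (left_mem_Icc.2 huv) (right_mem_Icc.2 huv))
    (edist_le f (left_mem_Icc.2 hvw) (right_mem_Icc.2 hvw))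

theorem sum_edist_add_edist_le_of_between {f : α → E} {x x' : ℕ → α} {c : ℕ → E} {n : ℕ}
    (hx : ∀ ℓ ≤ n, x ℓ ≤ x' ℓ) (hx' : ∀ ℓ < n, x' ℓ ≤ x (ℓ + 1))
    (hc : ∀ ℓ ≤ n, edist (f (x ℓ)) (c ℓ) + edist (c ℓ) (f (x' ℓ)) ≤ edist (f (x ℓ)) (f (x' ℓ))) :
    ∑ ℓ ∈ Finset.range n, edist (c (ℓ + 1)) (c ℓ) + edist (c n) (f (x' n)) ≤
      eVariationOn f (Icc (x 0) (x' n)) := by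
  induction n with
  | zero =>
    calc ∑ ℓ ∈ Finset.range 0, edist (c (ℓ + 1)) (c ℓ) + edist (c 0) (f (x' 0))
        ≤ edist (f (x 0)) (c 0) + edist (c 0) (f (x' 0)) := by simp
      _ ≤ edist (f (x 0)) (f (x' 0)) := hc 0 le_rfl
      _ ≤ eVariationOn f (Icc (x 0) (x' 0)) :=
          edist_le f (left_mem_Icc.2 (hx 0 le_rfl)) (right_mem_Icc.2 (hx 0 le_rfl))
  | succ n ih =>
    have ih := ih (fun ℓ hℓ ↦ hx ℓ (by omega)) (fun ℓ hℓ ↦ hx' ℓ (by omega))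
      (fun ℓ hℓ ↦ hc ℓ (by omega))
    have hx0 : ∀ m ≤ n, x 0 ≤ x' m := by
      intro m hm
      induction m with
      | zero => exact hx 0 (by omega)
      | succ m ihm =>
        exact (ihm (by omega)).trans ((hx' m (by omega)).trans (hx (m + 1) (by omega)))
    have hxn : x' n ≤ x (n + 1) := hx' n n.lt_succ_self
    have hsplit :=
      Icc_add_Icc f (s := univ) (hx0 n le_rfl) (hxn.trans (hx (n + 1) le_rfl)) (mem_univ _)
    simp only [univ_inter] at hsplit
    rw [Finset.sum_range_succ, ← hsplit]
    calc ∑ ℓ ∈ Finset.range n, edist (c (ℓ + 1)) (c ℓ) + edist (c (n + 1)) (c n)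
          + edist (c (n + 1)) (f (x' (n + 1)))
        ≤ ∑ ℓ ∈ Finset.range n, edist (c (ℓ + 1)) (c ℓ)
          + (edist (c n) (f (x' n)) + edist (f (x' n)) (f (x (n + 1)))
            + edist (f (x (n + 1))) (c (n + 1))) + edist (c (n + 1)) (f (x' (n + 1))) := by
          gcongr
          rw [edist_comm]
          exact edist_triangle4 _ _ _ _
      _ = (∑ ℓ ∈ Finset.range n, edist (c (ℓ + 1)) (c ℓ) + edist (c n) (f (x' n)))
          + (edist (f (x' n)) (f (x (n + 1)))
            + (edist (f (x (n + 1))) (c (n + 1)) + edist (c (n + 1)) (f (x' (n + 1))))) := by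
          ring
      _ ≤ eVariationOn f (Icc (x 0) (x' n)) + (edist (f (x' n)) (f (x (n + 1)))
            + edist (f (x (n + 1))) (f (x' (n + 1)))) := by
          gcongr
          exact hc (n + 1) le_rfl
      _ ≤ eVariationOn f (Icc (x 0) (x' n)) + eVariationOn f (Icc (x' n) (x' (n + 1))) := by
          gcongr
          exact edist_add_edist_le f hxn (hx (n + 1) le_rfl)

end eVariationOn

theorem Real.edist_add_edist_of_mem_uIcc {a b c : ℝ} (h : b ∈ uIcc a c) :
    edist a b + edist b c = edist a c := by
  rw [edist_dist, edist_dist, edist_dist, ← ENNReal.ofReal_add dist_nonneg dist_nonneg,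
    dist_add_dist_of_mem_segment (by rwa [segment_eq_uIcc])]

section FiniteExceptions

variable {f g : ℝ → ℝ} {a b : ℝ}

theorem lt_of_hasDerivAt_pos_off_finset (P : Finset ℝ) (hab : a < b)
    (hf : ContinuousOn f (Icc a b)) (hfd : ∀ x ∈ Ioo a b \ P, HasDerivAt f (g x) x)
    (hg : ∀ x ∈ Ioo a b \ P, 0 < g x) : f a < f b := by
  induction P using Finset.induction_on generalizing a b with
  | empty =>
    simp only [Finset.coe_empty, sdiff_empty] at hfd hg
    refine strictMonoOn_of_hasDerivWithinAt_pos (f' := g) (convex_Icc a b) hf (fun x hx ↦ ?_)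
      (fun x hx ↦ ?_) (left_mem_Icc.2 hab.le) (right_mem_Icc.2 hab.le) hab
    · rw [interior_Icc] at hx ⊢
      exact (hfd x hx).hasDerivWithinAt
    · exact hg x (by rwa [interior_Icc] at hx)
  | insert c Q _ ih =>
    have hsub : ∀ u v, a ≤ u → v ≤ b → u < v → c ∉ Ioo u v → f u < f v := by
      intro u v hau hvb huv hc
      have hmem : Ioo u v \ Q ⊆ Ioo a b \ ↑(insert c Q) := fun x hx ↦
        ⟨⟨hau.trans_lt hx.1.1, hx.1.2.trans_le hvb⟩, by
          simpa [not_or] using ⟨fun h ↦ hc (h ▸ hx.1), hx.2⟩⟩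
      exact ih huv (hf.mono (Icc_subset_Icc hau hvb)) (fun x hx ↦ hfd x (hmem hx))
        (fun x hx ↦ hg x (hmem hx))
    by_cases hc : c ∈ Ioo a b
    · exact (hsub a c le_rfl hc.2.le hc.1 (by simp)).trans (hsub c b hc.1.le le_rfl hc.2 (by simp))
    · exact hsub a b le_rfl le_rfl hab hc

theorem exists_hasDerivAt_le_slope_off_finset (P : Finset ℝ) (hab : a < b)
    (hf : ContinuousOn f (Icc a b)) (hfd : ∀ x ∈ Ioo a b \ P, HasDerivAt f (g x) x) :
    ∃ x ∈ Ioo a b \ P, g x ≤ slope f a b := by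
  by_contra! h
  set m := slope f a b with hm_def
  have hm : (b - a) * m = f b - f a := by
    rw [hm_def, ← smul_eq_mul, sub_smul_slope, vsub_eq_sub]
  have := lt_of_hasDerivAt_pos_off_finset P (f := fun x ↦ f x - m * x) (g := fun x ↦ g x - m) hab
    (hf.sub (continuousOn_const.mul continuousOn_id))
    (fun x hx ↦ ((hfd x hx).sub ((hasDerivAt_id' x).const_mul m)).congr_deriv (by ring))
    (fun x hx ↦ sub_pos.2 (h x hx))
  linarith

theorem exists_slope_le_hasDerivAt_off_finset (P : Finset ℝ) (hab : a < b)
    (hf : ContinuousOn f (Icc a b)) (hfd : ∀ x ∈ Ioo a b \ P, HasDerivAt f (g x) x) :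
    ∃ x ∈ Ioo a b \ P, slope f a b ≤ g x := by
  obtain ⟨x, hx, hgx⟩ := exists_hasDerivAt_le_slope_off_finset P hab hf.neg
    (fun x hx ↦ (hfd x hx).neg)
  exact ⟨x, hx, by simpa using hgx⟩

theorem exists_slope_mem_uIcc_off_finset (P : Finset ℝ) (hab : a < b)
    (hf : ContinuousOn f (Icc a b)) (hfd : ∀ x ∈ Ioo a b \ P, HasDerivAt f (g x) x) :
    ∃ x x', a < x ∧ x ≤ x' ∧ x' < b ∧ slope f a b ∈ uIcc (g x) (g x') := by
  obtain ⟨y, hy, hgy⟩ := exists_hasDerivAt_le_slope_off_finset P hab hf hfd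
  obtain ⟨z, hz, hgz⟩ := exists_slope_le_hasDerivAt_off_finset P hab hf hfd
  rcases le_total y z with hyz | hzy
  · exact ⟨y, z, hy.1.1, hyz, hz.1.2, Icc_subset_uIcc ⟨hgy, hgz⟩⟩
  · exact ⟨z, y, hz.1.1, hzy, hy.1.2, Icc_subset_uIcc' ⟨hgy, hgz⟩⟩

end FiniteExceptions

theorem sum_edist_slope_le_eVariationOn {f g : ℝ → ℝ} {τ : ℕ → ℝ} {n : ℕ} (P : Finset ℝ)
    (hτ : StrictMonoOn τ (Iic (n + 1))) (hf : ContinuousOn f (Icc (τ 0) (τ (n + 1))))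
    (hfd : ∀ x ∈ Ioo (τ 0) (τ (n + 1)) \ P, HasDerivAt f (g x) x) :
    ∑ ℓ ∈ Finset.range n, edist (slope f (τ (ℓ + 1)) (τ (ℓ + 2))) (slope f (τ ℓ) (τ (ℓ + 1))) ≤
      eVariationOn g (Icc (τ 0) (τ (n + 1))) := by
  have hlt : ∀ ℓ ≤ n, τ ℓ < τ (ℓ + 1) := fun ℓ hℓ ↦
    hτ (mem_Iic.2 (by omega)) (mem_Iic.2 (by omega)) ℓ.lt_succ_self
  have hbounds : ∀ ℓ ≤ n, τ 0 ≤ τ ℓ ∧ τ (ℓ + 1) ≤ τ (n + 1) := fun ℓ hℓ ↦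
    ⟨hτ.monotoneOn (mem_Iic.2 (by omega)) (mem_Iic.2 (by omega)) ℓ.zero_le,
      hτ.monotoneOn (mem_Iic.2 (by omega)) (mem_Iic.2 le_rfl) (by omega)⟩
  have hpts : ∀ ℓ ≤ n, ∃ x x', τ ℓ < x ∧ x ≤ x' ∧ x' < τ (ℓ + 1) ∧
      slope f (τ ℓ) (τ (ℓ + 1)) ∈ uIcc (g x) (g x') := fun ℓ hℓ ↦
    exists_slope_mem_uIcc_off_finset P (hlt ℓ hℓ)
      (hf.mono (Icc_subset_Icc (hbounds ℓ hℓ).1 (hbounds ℓ hℓ).2))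
      (fun x hx ↦ hfd x ⟨Ioo_subset_Ioo (hbounds ℓ hℓ).1 (hbounds ℓ hℓ).2 hx.1, hx.2⟩)
  choose! x x' hτx hxx' hx'τ hslope using hpts
  calc ∑ ℓ ∈ Finset.range n, edist (slope f (τ (ℓ + 1)) (τ (ℓ + 2))) (slope f (τ ℓ) (τ (ℓ + 1)))
      ≤ ∑ ℓ ∈ Finset.range n, edist (slope f (τ (ℓ + 1)) (τ (ℓ + 2))) (slope f (τ ℓ) (τ (ℓ + 1)))
        + edist (slope f (τ n) (τ (n + 1))) (g (x' n)) := le_self_add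
    _ ≤ eVariationOn g (Icc (x 0) (x' n)) :=
      eVariationOn.sum_edist_add_edist_le_of_between
        (c := fun ℓ ↦ slope f (τ ℓ) (τ (ℓ + 1))) hxx'
        (fun ℓ hℓ ↦ (hx'τ ℓ hℓ.le).le.trans (hτx (ℓ + 1) hℓ).le)
        (fun ℓ hℓ ↦ (Real.edist_add_edist_of_mem_uIcc (hslope ℓ hℓ)).le)
    _ ≤ eVariationOn g (Icc (τ 0) (τ (n + 1))) :=
      eVariationOn.mono g (Icc_subset_Icc (hτx 0 n.zero_le).le
        ((hx'τ n le_rfl).le.trans (hbounds n le_rfl).2))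

theorem stmt13_general (L : ℕ) (τ β s : ℕ → ℝ)
    (hτ : ∀ ℓ, ℓ < L - 1 → τ ℓ < τ (ℓ + 1))
    (hs : ∀ ℓ, ℓ < L - 1 → s ℓ = (β (ℓ + 1) - β ℓ) / (τ (ℓ + 1) - τ ℓ))
    -- pl is the continuous piecewise linear interpolant and g₀ its (piecewise constant)
    -- derivative
    (g₀ : ℝ → ℝ)
    (hg₀ : ∀ ℓ, ℓ < L - 1 → ∀ x ∈ Set.Ico (τ ℓ) (τ (ℓ + 1)), g₀ x = s ℓ)
    (hg₀b : g₀ (τ (L - 1)) = s (L - 2)) :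
    eVariationOn g₀ (Set.Icc (τ 0) (τ (L - 1))) =
      ∑ ℓ ∈ Finset.range (L - 2), ENNReal.ofReal |s (ℓ + 1) - s ℓ| ∧
    (∀ (f g : ℝ → ℝ) (P : Finset ℝ),
      ContinuousOn f (Set.Icc (τ 0) (τ (L - 1))) →
      (∀ x ∈ Set.Ioo (τ 0) (τ (L - 1)) \ (P : Set ℝ), HasDerivAt f (g x) x) →
      ContinuousOn g (Set.Icc (τ 0) (τ (L - 1)) \ (P : Set ℝ)) →
      BoundedVariationOn g (Set.Icc (τ 0) (τ (L - 1))) →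
      (∀ ℓ, ℓ < L → f (τ ℓ) = β ℓ) →
      (∑ ℓ ∈ Finset.range (L - 2), ENNReal.ofReal |s (ℓ + 1) - s ℓ|) ≤
        eVariationOn g (Set.Icc (τ 0) (τ (L - 1)))) := by
  rcases Nat.lt_or_ge L 2 with hL | hL
  · simp [show L - 1 = 0 by omega, show L - 2 = 0 by omega]
  obtain ⟨n, rfl⟩ : ∃ n, L = n + 2 := ⟨L - 2, by omega⟩
  simp only [show n + 2 - 1 = n + 1 by omega, show n + 2 - 2 = n by omega] at *
  have hτ' : StrictMonoOn τ (Iic (n + 1)) := strictMonoOn_Iic_of_lt_succ hτ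
  simp only [← Real.dist_eq, ← edist_dist]
  refine ⟨eVariationOn.Icc_of_step hτ' (fun ℓ hℓ ↦ hg₀ ℓ (by omega)) hg₀b,
    fun f g P hf hfd _ _ hfτ ↦ ?_⟩
  have hslope : ∀ ℓ ≤ n, slope f (τ ℓ) (τ (ℓ + 1)) = s ℓ := fun ℓ hℓ ↦ by
    rw [slope_def_field, hfτ ℓ (by omega), hfτ (ℓ + 1) (by omega), hs ℓ (by omega)]
  calc ∑ ℓ ∈ Finset.range n, edist (s (ℓ + 1)) (s ℓ)
      = ∑ ℓ ∈ Finset.range n,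
          edist (slope f (τ (ℓ + 1)) (τ (ℓ + 2))) (slope f (τ ℓ) (τ (ℓ + 1))) :=
        Finset.sum_congr rfl fun ℓ hℓ ↦ by
          rw [Finset.mem_range] at hℓ
          rw [hslope ℓ hℓ.le, hslope (ℓ + 1) hℓ]
    _ ≤ eVariationOn g (Icc (τ 0) (τ (n + 1))) := sum_edist_slope_le_eVariationOn P hτ' hf hfd

/-- Minimality of the linear spline interpolant (Pinkus; Koenker et al.): among continuous
piecewise-C¹ functions f with derivative of bounded variation interpolating β_ℓ at the knots
τ_ℓ, the piecewise linear interpolant achieves total variation of the derivative equal to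
Σ_ℓ |s_{ℓ+1} - s_ℓ| with s_ℓ = (β_{ℓ+1} - β_ℓ)/(τ_{ℓ+1} - τ_ℓ), and no interpolant achieves a
smaller total variation of its derivative. -/
theorem stmt13 (L : ℕ) (hL : 2 ≤ L) (τ β s : ℕ → ℝ)
    (hτ : ∀ ℓ, ℓ < L - 1 → τ ℓ < τ (ℓ + 1))
    (hs : ∀ ℓ, ℓ < L - 1 → s ℓ = (β (ℓ + 1) - β ℓ) / (τ (ℓ + 1) - τ ℓ))
    -- pl is the continuous piecewise linear interpolant and g₀ its (piecewise constant)
    -- derivative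
    (pl g₀ : ℝ → ℝ)
    (hpl : ∀ ℓ, ℓ < L - 1 → ∀ x ∈ Set.Icc (τ ℓ) (τ (ℓ + 1)),
      pl x = β ℓ + s ℓ * (x - τ ℓ))
    (hg₀ : ∀ ℓ, ℓ < L - 1 → ∀ x ∈ Set.Ico (τ ℓ) (τ (ℓ + 1)), g₀ x = s ℓ)
    (hg₀b : g₀ (τ (L - 1)) = s (L - 2)) :
    eVariationOn g₀ (Set.Icc (τ 0) (τ (L - 1))) =
      ∑ ℓ ∈ Finset.range (L - 2), ENNReal.ofReal |s (ℓ + 1) - s ℓ| ∧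
    (∀ (f g : ℝ → ℝ) (P : Finset ℝ),
      ContinuousOn f (Set.Icc (τ 0) (τ (L - 1))) →
      (∀ x ∈ Set.Ioo (τ 0) (τ (L - 1)) \ (P : Set ℝ), HasDerivAt f (g x) x) →
      ContinuousOn g (Set.Icc (τ 0) (τ (L - 1)) \ (P : Set ℝ)) →
      BoundedVariationOn g (Set.Icc (τ 0) (τ (L - 1))) →
      (∀ ℓ, ℓ < L → f (τ ℓ) = β ℓ) →
      (∑ ℓ ∈ Finset.range (L - 2), ENNReal.ofReal |s (ℓ + 1) - s ℓ|) ≤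
        eVariationOn g (Set.Icc (τ 0) (τ (L - 1)))) :=
  stmt13_general L τ β s hτ hs g₀ hg₀ hg₀b
end
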